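/- (Non-matchability criterion.) Let (V⁻, g⁻) admit a two-dimensional Abelian group generated by Killing fields ξ⁻, η⁻ such that the 4-forms ξ⁻_♭∧η⁻_♭∧dξ⁻_♭ and ξ⁻_♭∧η⁻_♭∧dη⁻_♭ are nowhere simultaneously zero. Then there is no matching of (V⁻, g⁻) to any spacetime (V⁺, g⁺) admitting an orthogonally transitive G₂ that preserves these two G₂ groups (i.e., satisfies preliminary junction conditions, equal generalized second fundamental forms, and relates the generators through the embeddings to common vector fields on σ). -/

import Mathlib

/-!
Coordinate (local-chart) formalization of pseudo-Riemannian geometry on `ℝⁿ`: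
manifolds are modeled by `Pt n = Fin n → ℝ`, tensor fields by their component
functions, and all differential-geometric operations (Lie derivatives, the
Levi-Civita connection via Christoffel symbols, curvature, pullbacks along
embeddings, exterior derivatives and wedge products) are defined explicitly.
-/

noncomputable section
open scoped BigOperators

abbrev Pt (n : ℕ) : Type := Fin n → ℝ

/-- Partial derivative `∂_a f` of a scalar function. -/
def pd {n : ℕ} (f : Pt n → ℝ) (a : Fin n) (x : Pt n) : ℝ :=
  fderiv ℝ f x (Pi.single a 1)

/-- Pairing of a covector (components `ω`) with a vector (components `u`). -/
def ip {n : ℕ} (ω u : Fin n → ℝ) : ℝ := ∑ α, ω α * u α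

/-- Scalar product of two vectors with respect to the metric `g`. -/
def gdot {n : ℕ} (g : Pt n → Fin n → Fin n → ℝ) (x : Pt n) (u v : Fin n → ℝ) : ℝ :=
  ∑ a, ∑ b, g x a b * u a * v b

/-- Index lowering: the 1-form `ξ_♭` metrically dual to the vector field `ξ`. -/
def flat {n : ℕ} (g : Pt n → Fin n → Fin n → ℝ) (ξ : Pt n → Pt n) (x : Pt n) (b : Fin n) : ℝ :=
  ∑ c, g x b c * ξ x c

/-- Lie derivative `(ℒ_ξ g)_{ab}` of a symmetric 2-covariant tensor field `g`
along the vector field `ξ`. -/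
def lieD {n : ℕ} (g : Pt n → Fin n → Fin n → ℝ) (ξ : Pt n → Pt n) (x : Pt n) (a b : Fin n) : ℝ :=
  ∑ c, (ξ x c * pd (fun y => g y a b) c x
      + g x c b * pd (fun y => ξ y c) a x
      + g x a c * pd (fun y => ξ y c) b x)

/-- Lie bracket `[ξ, η]` of two vector fields. -/
def lieBr {n : ℕ} (ξ η : Pt n → Pt n) (x : Pt n) : Pt n :=
  fun a => ∑ b, (ξ x b * pd (fun y => η y a) b x - η x b * pd (fun y => ξ y a) b x)

/-- Christoffel symbols `Γ^a_{bc}` of the Levi-Civita connection of `g`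
(`ginv` is the inverse metric). -/
def Chr {n : ℕ} (g ginv : Pt n → Fin n → Fin n → ℝ) (a b c : Fin n) (x : Pt n) : ℝ :=
  (1/2) * ∑ d, ginv x a d *
    (pd (fun y => g y d b) c x + pd (fun y => g y d c) b x - pd (fun y => g y b c) d x)

/-- Covariant derivative `∇_a ω_b` of a 1-form `ω`. -/
def covD {n : ℕ} (g ginv : Pt n → Fin n → Fin n → ℝ) (ω : Pt n → Fin n → ℝ)
    (x : Pt n) (a b : Fin n) : ℝ :=
  pd (fun y => ω y b) a x - ∑ c, Chr g ginv c a b x * ω x c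

/-- Covariant derivative `∇_m S_{abcd}` of a 4-covariant tensor field `S`. -/
def covD4 {n : ℕ} (g ginv : Pt n → Fin n → Fin n → ℝ)
    (S : Pt n → Fin n → Fin n → Fin n → Fin n → ℝ) (x : Pt n) (m a b c d : Fin n) : ℝ :=
  pd (fun y => S y a b c d) m x
    - ∑ e, Chr g ginv e m a x * S x e b c d
    - ∑ e, Chr g ginv e m b x * S x a e c d
    - ∑ e, Chr g ginv e m c x * S x a b e d
    - ∑ e, Chr g ginv e m d x * S x a b c e

/-- Riemann tensor `R^a_{bcd}` of the Levi-Civita connection. -/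
def Riem {n : ℕ} (g ginv : Pt n → Fin n → Fin n → ℝ) (a b c d : Fin n) (x : Pt n) : ℝ :=
  pd (fun y => Chr g ginv a d b y) c x - pd (fun y => Chr g ginv a c b y) d x
    + ∑ e, (Chr g ginv a c e x * Chr g ginv e d b x - Chr g ginv a d e x * Chr g ginv e c b x)

/-- Ricci tensor `R_{bd} = R^a_{bad}`. -/
def RicciT {n : ℕ} (g ginv : Pt n → Fin n → Fin n → ℝ) (b d : Fin n) (x : Pt n) : ℝ :=
  ∑ a, Riem g ginv a b a d x

/-- Normalized antisymmetrization of a 3-index quantity. -/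
def asym3 {ι : Type*} (T : ι → ι → ι → ℝ) (a b c : ι) : ℝ :=
  (1/6) * ∑ σ : Equiv.Perm (Fin 3),
    ((Equiv.Perm.sign σ : ℤ) : ℝ) * T (![a, b, c] (σ 0)) (![a, b, c] (σ 1)) (![a, b, c] (σ 2))

/-- Normalized antisymmetrization of a 4-index quantity. -/
def asym4 {ι : Type*} (T : ι → ι → ι → ι → ℝ) (a b c d : ι) : ℝ :=
  (1/24) * ∑ σ : Equiv.Perm (Fin 4),
    ((Equiv.Perm.sign σ : ℤ) : ℝ) *
      T (![a, b, c, d] (σ 0)) (![a, b, c, d] (σ 1)) (![a, b, c, d] (σ 2)) (![a, b, c, d] (σ 3))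

/-- Pullback `Φ* g` of a 2-covariant tensor field along a map `Φ`
(first fundamental form when `Φ` is an embedding and `g` the metric). -/
def pull2 {d m : ℕ} (Φ : Pt d → Pt m) (g : Pt m → Fin m → Fin m → ℝ)
    (p : Pt d) (a b : Fin d) : ℝ :=
  ∑ α, ∑ β, g (Φ p) α β *
    fderiv ℝ Φ p (Pi.single a 1) α * fderiv ℝ Φ p (Pi.single b 1) β

/-- The tangent frame `e_a = dΦ(∂/∂λ^a)` along the hypersurface `Σ = Φ(σ)`. -/
def eF {d : ℕ} (Φ : Pt d → Pt (d+1)) (a : Fin d) (p : Pt d) : Pt (d+1) :=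
  fderiv ℝ Φ p (Pi.single a 1)

/-- Exterior derivative `dω` of a 1-form evaluated on two vectors:
`dω(u,v) = u^α v^β (∂_α ω_β - ∂_β ω_α)`. -/
def dext {n : ℕ} (ω : Pt n → Fin n → ℝ) (x : Pt n) (u v : Fin n → ℝ) : ℝ :=
  ∑ α, ∑ β, u α * v β * (pd (fun y => ω y β) α x - pd (fun y => ω y α) β x)

/-- Wedge product of two covectors evaluated on two vectors. -/
def wdg2 {n : ℕ} (ω τ : Fin n → ℝ) (u v : Fin n → ℝ) : ℝ :=
  ip ω u * ip τ v - ip ω v * ip τ u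

/-- Wedge product of four covectors evaluated on four vectors (determinant convention). -/
def wdg4 {n : ℕ} (ω₁ ω₂ ω₃ ω₄ : Fin n → ℝ) (u : Fin 4 → Fin n → ℝ) : ℝ :=
  ∑ σ : Equiv.Perm (Fin 4), ((Equiv.Perm.sign σ : ℤ) : ℝ) *
    (ip ω₁ (u (σ 0)) * ip ω₂ (u (σ 1)) * ip ω₃ (u (σ 2)) * ip ω₄ (u (σ 3)))

/-- The 4-form `A_♭ ∧ B_♭ ∧ d(B_♭)` built from two vector fields `A`, `B`
(indices lowered with `g`), evaluated on four vectors. -/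
def form4 {n : ℕ} (g : Pt n → Fin n → Fin n → ℝ) (A B : Pt n → Pt n) (x : Pt n)
    (u : Fin 4 → Fin n → ℝ) : ℝ :=
  (1/2) * ∑ σ : Equiv.Perm (Fin 4), ((Equiv.Perm.sign σ : ℤ) : ℝ) *
    (ip (flat g A x) (u (σ 0)) * ip (flat g B x) (u (σ 1)) *
      dext (flat g B) x (u (σ 2)) (u (σ 3)))

/-- Covariant derivative `∇_{e_a} ℓ` of a vector field `ℓ` defined along `Σ = Φ(σ)`. -/
def covVecS {d : ℕ} (g ginv : Pt (d+1) → Fin (d+1) → Fin (d+1) → ℝ) (Φ : Pt d → Pt (d+1))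
    (ℓ : Pt d → Pt (d+1)) (a : Fin d) (p : Pt d) : Pt (d+1) :=
  fun μ => pd (fun q => ℓ q μ) a p + ∑ ν, ∑ ρ, Chr g ginv μ ν ρ (Φ p) * eF Φ a p ν * ℓ p ρ

/-- The lowered components `ℓ_ν` along `Σ` of a vector field `ℓ` defined along `Σ`. -/
def flatS {d : ℕ} (g : Pt (d+1) → Fin (d+1) → Fin (d+1) → ℝ) (Φ : Pt d → Pt (d+1))
    (ℓ : Pt d → Pt (d+1)) (p : Pt d) (ν : Fin (d+1)) : ℝ :=
  ∑ ρ, g (Φ p) ν ρ * ℓ p ρ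

/-- Generalized second fundamental form `H_{ab} = e_a^μ e_b^ν ∇_μ ℓ_ν`
with respect to the rigging `ℓ`. -/
def Hgen {d : ℕ} (g ginv : Pt (d+1) → Fin (d+1) → Fin (d+1) → ℝ) (Φ : Pt d → Pt (d+1))
    (ℓ : Pt d → Pt (d+1)) (a b : Fin d) (p : Pt d) : ℝ :=
  ∑ ν, eF Φ b p ν * (pd (fun q => flatS g Φ ℓ q ν) a p
    - ∑ c, (∑ μ, eF Φ a p μ * Chr g ginv c μ ν (Φ p)) * flatS g Φ ℓ p c)

/-- Transversal component `B_a = 2 ℓ^α e_a^β ∇_{[α} ω_{β]}` of `dω` along `Σ`. -/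
def Bcoef {d : ℕ} (g ginv : Pt (d+1) → Fin (d+1) → Fin (d+1) → ℝ) (Φ : Pt d → Pt (d+1))
    (ℓ : Pt d → Pt (d+1)) (ω : Pt (d+1) → Fin (d+1) → ℝ) (a : Fin d) (p : Pt d) : ℝ :=
  ∑ α, ∑ β, ℓ p α * eF Φ a p β * (covD g ginv ω (Φ p) α β - covD g ginv ω (Φ p) β α)

/-- Tangential component `A_{ab} = e_{[a}(ω_{b]})` of `dω` along `Σ`. -/
def Acoef {d : ℕ} (Φ : Pt d → Pt (d+1)) (ω : Pt (d+1) → Fin (d+1) → ℝ)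
    (a b : Fin d) (p : Pt d) : ℝ :=
  (1/2) * (pd (fun q => ip (ω (Φ q)) (eF Φ b q)) a p - pd (fun q => ip (ω (Φ q)) (eF Φ a q)) b p)

/-- The identified frame `{ℓ, e_a}` along `Σ`, indexed by `Option (Fin d)`. -/
def frameV {d : ℕ} (Φ : Pt d → Pt (d+1)) (ℓ : Pt d → Pt (d+1)) (p : Pt d) :
    Option (Fin d) → Pt (d+1)
  | none => ℓ p
  | some a => eF Φ a p

/-! ### Infrastructure -/

section Infra
variable {n m d : ℕ}

/-- decompose a vector as sum of coordinates times basis vectors -/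
lemma vec_decomp (v : Pt n) : v = ∑ α, v α • (Pi.single α 1 : Pt n) := by
  funext i
  simp [Finset.sum_apply, Pi.single_apply]

lemma clm_eval {F : Type*} [NormedAddCommGroup F] [NormedSpace ℝ F]
    (L : (Pt n) →L[ℝ] F) (v : Pt n) : L v = ∑ α, v α • L (Pi.single α 1) := by
  conv_lhs => rw [vec_decomp v]
  rw [map_sum]
  simp

lemma clm_eval_real (L : (Pt n) →L[ℝ] ℝ) (v : Pt n) :
    L v = ∑ α, v α * L (Pi.single α 1) := by
  rw [clm_eval]; simp [smul_eq_mul]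

lemma fderiv_eval (f : Pt n → ℝ) (x : Pt n) (v : Pt n) :
    fderiv ℝ f x v = ∑ α, v α * pd f α x := by
  rw [clm_eval_real]; rfl

/-- ip is linear in the vector argument (finite combination version). -/
lemma ip_lin {ι : Type*} [Fintype ι] (ω : Pt n) (c : ι → ℝ) (v : ι → Pt n) :
    ip ω (fun α => ∑ j, c j * v j α) = ∑ j, c j * ip ω (v j) := by
  simp only [ip, Finset.mul_sum]
  rw [Finset.sum_comm]
  congr 1; ext α; congr 1; ext j; ring

lemma pd_congr {f g : Pt n → ℝ} (h : ∀ y, f y = g y) (a : Fin n) (x : Pt n) :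
    pd f a x = pd g a x := by
  have : f = g := funext h
  rw [this]

lemma pd_add {f g : Pt n → ℝ} (hf : DifferentiableAt ℝ f x) (hg : DifferentiableAt ℝ g x)
    (a : Fin n) : pd (fun y => f y + g y) a x = pd f a x + pd g a x := by
  unfold pd
  rw [fderiv_fun_add hf hg]; rfl

lemma pd_mul {f g : Pt n → ℝ} {x : Pt n} (hf : DifferentiableAt ℝ f x)
    (hg : DifferentiableAt ℝ g x) (a : Fin n) :
    pd (fun y => f y * g y) a x = pd f a x * g x + f x * pd g a x := by
  unfold pd
  rw [fderiv_fun_mul hf hg]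
  simp [smul_eq_mul]; ring

lemma pd_sum {ι : Type*} (s : Finset ι) {f : ι → Pt n → ℝ} {x : Pt n}
    (hf : ∀ i ∈ s, DifferentiableAt ℝ (f i) x) (a : Fin n) :
    pd (fun y => ∑ i ∈ s, f i y) a x = ∑ i ∈ s, pd (f i) a x := by
  unfold pd
  rw [fderiv_fun_sum hf]; simp

lemma pd_comp {f : Pt m → ℝ} {Φ : Pt n → Pt m} {p : Pt n}
    (hf : DifferentiableAt ℝ f (Φ p)) (hΦ : DifferentiableAt ℝ Φ p) (a : Fin n) :
    pd (fun q => f (Φ q)) a p = ∑ α, fderiv ℝ Φ p (Pi.single a 1) α * pd f α (Φ p) := by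
  unfold pd
  rw [show (fun q => f (Φ q)) = f ∘ Φ from rfl, fderiv_comp p hf hΦ]
  simp only [ContinuousLinearMap.comp_apply]
  rw [fderiv_eval]
  rfl

lemma sum_rot3 {I J K : Type*} [Fintype I] [Fintype J] [Fintype K] (f : I → J → K → ℝ) :
    (∑ i, ∑ j, ∑ k, f i j k) = ∑ k, ∑ j, ∑ i, f i j k := by
  calc (∑ i, ∑ j, ∑ k, f i j k) = ∑ j, ∑ i, ∑ k, f i j k := Finset.sum_comm
    _ = ∑ j, ∑ k, ∑ i, f i j k := Finset.sum_congr rfl fun j _ => Finset.sum_comm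
    _ = ∑ k, ∑ j, ∑ i, f i j k := Finset.sum_comm

end Infra
section Infra2
variable {n m d : ℕ}

lemma contDiff_comp_pt {f : Pt m → ℝ} {Φ : Pt n → Pt m} (hf : ContDiff ℝ (⊤:ℕ∞) f)
    (hΦ : ContDiff ℝ (⊤:ℕ∞) Φ) : ContDiff ℝ (⊤:ℕ∞) (fun q => f (Φ q)) :=
  hf.comp hΦ

lemma contDiff_pd {f : Pt n → ℝ} (hf : ContDiff ℝ (⊤:ℕ∞) f) (a : Fin n) :
    ContDiff ℝ (⊤:ℕ∞) (fun x => pd f a x) := by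
  have h1 : ContDiff ℝ (⊤:ℕ∞) (fun x => fderiv ℝ f x) := hf.fderiv_right (by exact_mod_cast le_top)
  exact h1.clm_apply contDiff_const

lemma contDiff_eF {Φ : Pt d → Pt (d+1)} (hΦ : ContDiff ℝ (⊤:ℕ∞) Φ) (a : Fin d) (β : Fin (d+1)) :
    ContDiff ℝ (⊤:ℕ∞) (fun q => eF Φ a q β) := by
  have h1 : ContDiff ℝ (⊤:ℕ∞) (fun q => fderiv ℝ Φ q) := hΦ.fderiv_right (by exact_mod_cast le_top)
  have h2 : ContDiff ℝ (⊤:ℕ∞) (fun q => fderiv ℝ Φ q (Pi.single a 1)) :=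
    h1.clm_apply contDiff_const
  exact (contDiff_pi.1 h2) β

lemma eF_comp (Φ : Pt d → Pt (d+1)) (a : Fin d) (p : Pt d) (β : Fin (d+1))
    (hΦ : ContDiff ℝ (⊤:ℕ∞) Φ) :
    eF Φ a p β = pd (fun q => Φ q β) a p := by
  unfold eF pd
  rw [fderiv_pi (fun i => (differentiableAt_pi.1 (hΦ.differentiable (by simp) p) i))]
  rfl

lemma pd_eF_symm {Φ : Pt d → Pt (d+1)} (hΦ : ContDiff ℝ (⊤:ℕ∞) Φ) (a b : Fin d)
    (β : Fin (d+1)) (p : Pt d) :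
    pd (fun q => eF Φ b q β) a p = pd (fun q => eF Φ a q β) b p := by
  have hcomp : ∀ γ : Fin d, ∀ q, eF Φ γ q β = fderiv ℝ (fun r => Φ r β) q (Pi.single γ 1) := by
    intro γ q
    rw [eF_comp Φ γ q β hΦ]; rfl
  have hfβ : ContDiff ℝ (⊤:ℕ∞) (fun r => Φ r β) := (contDiff_pi.1 hΦ) β
  have hd : DifferentiableAt ℝ (fun q => fderiv ℝ (fun r => Φ r β) q) p :=
    ((hfβ.fderiv_right (m := (⊤:ℕ∞)) (by exact_mod_cast le_top)).differentiable (by simp)) p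
  have key : ∀ γ δ : Fin d,
      pd (fun q => fderiv ℝ (fun r => Φ r β) q (Pi.single γ 1)) δ p
        = fderiv ℝ (fderiv ℝ (fun r => Φ r β)) p (Pi.single δ 1) (Pi.single γ 1) := by
    intro γ δ
    unfold pd
    rw [fderiv_clm_apply hd (differentiableAt_const _)]
    simp
  rw [pd_congr (fun q => hcomp b q) a p, pd_congr (fun q => hcomp a q) b p, key, key]
  exact (hfβ.contDiffAt.isSymmSndFDerivAt (by rw [minSmoothness_of_isRCLikeNormedField]; exact WithTop.coe_le_coe.2 le_top)).eq _ _

/-- Reconstruction of a vector from a frame with a dual coframe. -/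
lemma frame_reconstruct {v w : Option (Fin d) → Pt (d+1)}
    (hdual : ∀ j k, ip (w j) (v k) = if j = k then (1:ℝ) else 0) (u : Pt (d+1)) :
    u = fun α => ∑ j, ip (w j) u * v j α := by
  have hiplin : ∀ (ω : Pt (d+1)) (c : Option (Fin d) → ℝ),
      ip ω (∑ j, c j • v j) = ∑ j, c j * ip ω (v j) := by
    intro ω c
    have : (∑ j, c j • v j) = fun α => ∑ j, c j * v j α := by
      funext α; simp [Finset.sum_apply]
    rw [this, ip_lin]
  have hli : LinearIndependent ℝ v := by
    rw [Fintype.linearIndependent_iff]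
    intro c hc k
    have h1 : ip (w k) (∑ j, c j • v j) = 0 := by rw [hc]; simp [ip]
    rw [hiplin] at h1
    simpa [hdual, mul_ite, mul_one, mul_zero, Finset.sum_ite_eq, Finset.sum_ite_eq'] using h1
  have hcard : Fintype.card (Option (Fin d)) = Module.finrank ℝ (Pt (d+1)) := by
    simp [Module.finrank_fin_fun]
  let b := basisOfLinearIndependentOfCardEqFinrank hli hcard
  have hb : ⇑b = v := coe_basisOfLinearIndependentOfCardEqFinrank hli hcard
  have hrepr : u = ∑ j, b.repr u j • v j := by
    conv_lhs => rw [← b.sum_repr u]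
    simp [hb]
  have hcoef : ∀ k, ip (w k) u = b.repr u k := by
    intro k
    conv_lhs => rw [hrepr]
    rw [hiplin]
    simp [hdual, mul_ite, mul_one, mul_zero, Finset.sum_ite_eq, Finset.sum_ite_eq']
  funext α
  conv_lhs => rw [hrepr]
  simp only [Finset.sum_apply, Pi.smul_apply, smul_eq_mul, hcoef]

end Infra2
section Infra3
variable {n : ℕ} {g ginv : Pt n → Fin n → Fin n → ℝ}

lemma cd_diffAt {f : Pt n → ℝ} (hf : ContDiff ℝ (⊤:ℕ∞) f) (x : Pt n) :
    DifferentiableAt ℝ f x := hf.differentiable (by simp) x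

lemma comp_diffAt {N M : ℕ} {f : Pt N → Pt M} (hf : ContDiff ℝ (⊤:ℕ∞) f) (c : Fin M)
    (x : Pt N) : DifferentiableAt ℝ (fun y => f y c) x :=
  ((contDiff_pi.1 hf) c).differentiable (by simp) x

lemma vf_diffAt {ξ : Pt n → Pt n} (hξ : ContDiff ℝ (⊤:ℕ∞) ξ) (c : Fin n) (x : Pt n) :
    DifferentiableAt ℝ (fun y => ξ y c) x :=
  cd_diffAt ((contDiff_pi.1 hξ) c) x

/-- `g · ginv = 1` from `ginv · g = 1`. -/
lemma ginv_right (hinv : ∀ x a b, (∑ c, ginv x a c * g x c b) = if a = b then (1:ℝ) else 0)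
    (x : Pt n) (a b : Fin n) : (∑ c, g x a c * ginv x c b) = if a = b then (1:ℝ) else 0 := by
  let A : Matrix (Fin n) (Fin n) ℝ := Matrix.of fun i j => ginv x i j
  let B : Matrix (Fin n) (Fin n) ℝ := Matrix.of fun i j => g x i j
  have hAB : A * B = 1 := by
    ext i j
    rw [Matrix.mul_apply]
    simpa [A, B, Matrix.one_apply] using hinv x i j
  have hBA : B * A = 1 := mul_eq_one_comm.1 hAB
  have := congrFun (congrFun hBA a) b
  rw [Matrix.mul_apply] at this
  simpa [A, B, Matrix.one_apply] using this

/-- Lowered Christoffel symbols. -/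
lemma chr_lowered (hinv : ∀ x a b, (∑ c, ginv x a c * g x c b) = if a = b then (1:ℝ) else 0)
    (x : Pt n) (e a b : Fin n) :
    (∑ c, g x e c * Chr g ginv c a b x)
      = (1/2) * (pd (fun y => g y e a) b x + pd (fun y => g y e b) a x
          - pd (fun y => g y a b) e x) := by
  unfold Chr
  have h1 : ∀ c, g x e c * ((1/2) * ∑ dd, ginv x c dd *
      (pd (fun y => g y dd a) b x + pd (fun y => g y dd b) a x - pd (fun y => g y a b) dd x))
      = (1/2) * ∑ dd, (g x e c * ginv x c dd) *
      (pd (fun y => g y dd a) b x + pd (fun y => g y dd b) a x - pd (fun y => g y a b) dd x) := by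
    intro c
    simp only [Finset.mul_sum]
    apply Finset.sum_congr rfl; intro dd _; ring
  rw [Finset.sum_congr rfl (fun c _ => h1 c), ← Finset.mul_sum, Finset.sum_comm]
  have h2 : ∀ dd, (∑ c, (g x e c * ginv x c dd) *
      (pd (fun y => g y dd a) b x + pd (fun y => g y dd b) a x - pd (fun y => g y a b) dd x))
      = (if e = dd then (1:ℝ) else 0) *
      (pd (fun y => g y dd a) b x + pd (fun y => g y dd b) a x - pd (fun y => g y a b) dd x) := by
    intro dd
    rw [← Finset.sum_mul, ginv_right hinv]
  rw [Finset.sum_congr rfl (fun dd _ => h2 dd)]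
  simp [Finset.sum_ite_eq, Finset.sum_ite_eq']

/-- Metricity: `∂_μ g_{νσ} = Γ^c_{μν} g_{cσ} + g_{νc} Γ^c_{μσ}`. -/
lemma metricity (hsymm : ∀ x a b, g x a b = g x b a)
    (hinv : ∀ x a b, (∑ c, ginv x a c * g x c b) = if a = b then (1:ℝ) else 0)
    (x : Pt n) (μ ν σ : Fin n) :
    pd (fun y => g y ν σ) μ x
      = (∑ c, Chr g ginv c μ ν x * g x c σ) + (∑ c, g x ν c * Chr g ginv c μ σ x) := by
  have e1 : (∑ c, Chr g ginv c μ ν x * g x c σ) = ∑ c, g x σ c * Chr g ginv c μ ν x := by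
    apply Finset.sum_congr rfl; intro c _; rw [hsymm x c σ]; ring
  rw [e1, chr_lowered hinv, chr_lowered hinv]
  have s1 : pd (fun y => g y σ μ) ν x = pd (fun y => g y μ σ) ν x :=
    pd_congr (fun y => hsymm y σ μ) _ _
  have s2 : pd (fun y => g y σ ν) μ x = pd (fun y => g y ν σ) μ x :=
    pd_congr (fun y => hsymm y σ ν) _ _
  have s3 : pd (fun y => g y ν μ) σ x = pd (fun y => g y μ ν) σ x :=
    pd_congr (fun y => hsymm y ν μ) _ _
  rw [s1, s2, s3]
  ring

lemma chr_symm (hsymm : ∀ x a b, g x a b = g x b a) (x : Pt n) (a b c : Fin n) :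
    Chr g ginv a b c x = Chr g ginv a c b x := by
  unfold Chr
  congr 1
  apply Finset.sum_congr rfl
  intro dd _
  rw [pd_congr (fun y => hsymm y b c) dd x]
  ring

/-- Killing equation: symmetrized covariant derivative of the flat of `ξ` equals `ℒ_ξ g`. -/
lemma killing_covD (hg : ∀ a b, ContDiff ℝ (⊤:ℕ∞) fun x => g x a b)
    (hsymm : ∀ x a b, g x a b = g x b a)
    (hinv : ∀ x a b, (∑ c, ginv x a c * g x c b) = if a = b then (1:ℝ) else 0)
    {ξ : Pt n → Pt n} (hξ : ContDiff ℝ (⊤:ℕ∞) ξ) (x : Pt n) (a b : Fin n) :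
    covD g ginv (flat g ξ) x a b + covD g ginv (flat g ξ) x b a = lieD g ξ x a b := by
  have pd_flat : ∀ (a b : Fin n), pd (fun y => flat g ξ y b) a x
      = ∑ c, (pd (fun y => g y b c) a x * ξ x c + g x b c * pd (fun y => ξ y c) a x) := by
    intro a b
    unfold flat
    rw [pd_sum _ (fun c _ => ((cd_diffAt (hg b c) x).fun_mul (vf_diffAt hξ c x)))]
    exact Finset.sum_congr rfl fun c _ => pd_mul (cd_diffAt (hg b c) x) (vf_diffAt hξ c x) a
  have low : ∀ (a b : Fin n), (∑ c, Chr g ginv c a b x * flat g ξ x c)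
      = ∑ e, ξ x e * ((1/2) * (pd (fun y => g y e a) b x + pd (fun y => g y e b) a x
          - pd (fun y => g y a b) e x)) := by
    intro a b
    have : ∀ c, Chr g ginv c a b x * flat g ξ x c
        = ∑ e, (g x e c * Chr g ginv c a b x) * ξ x e := by
      intro c
      unfold flat
      rw [Finset.mul_sum]
      apply Finset.sum_congr rfl; intro e _
      rw [hsymm x c e]; ring
    rw [Finset.sum_congr rfl (fun c _ => this c), Finset.sum_comm]
    apply Finset.sum_congr rfl; intro e _
    rw [← Finset.sum_mul, chr_lowered hinv]
    ring
  unfold covD lieD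
  rw [pd_flat, pd_flat, low, low]
  rw [← Finset.sum_sub_distrib, ← Finset.sum_sub_distrib, ← Finset.sum_add_distrib]
  apply Finset.sum_congr rfl; intro c _
  have t1 : pd (fun y => g y b c) a x = pd (fun y => g y c b) a x :=
    pd_congr (fun y => hsymm y b c) _ _
  have t2 : pd (fun y => g y a c) b x = pd (fun y => g y c a) b x :=
    pd_congr (fun y => hsymm y a c) _ _
  have t3 : pd (fun y => g y b a) c x = pd (fun y => g y a b) c x :=
    pd_congr (fun y => hsymm y b a) _ _
  rw [t1, t2, t3, hsymm x b c]
  ring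

end Infra3
section Infra4
variable {n : ℕ}

/-- `⟨A_♭, v⟩ = g(v, A)`. -/
lemma ip_flat (g : Pt n → Fin n → Fin n → ℝ) (A : Pt n → Pt n) (x : Pt n) (v : Pt n) :
    ip (flat g A x) v = gdot g x v (A x) := by
  simp only [ip, flat, gdot, Finset.sum_mul]
  apply Finset.sum_congr rfl; intro b _
  apply Finset.sum_congr rfl; intro c _
  ring

/-- `g(u, ·)` as a covector pairing. -/
lemma gdot_eq_ip (g : Pt n → Fin n → Fin n → ℝ) (x : Pt n) (u v : Pt n) :
    gdot g x u v = ip (fun β => ∑ α, g x α β * u α) v := by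
  simp only [gdot, ip]
  rw [Finset.sum_comm]
  apply Finset.sum_congr rfl; intro b _
  rw [Finset.sum_mul]

end Infra4

section Infra5
variable {d : ℕ} {g ginv : Pt (d+1) → Fin (d+1) → Fin (d+1) → ℝ}
  {Φ : Pt d → Pt (d+1)} {ℓ : Pt d → Pt (d+1)} {ξ : Pt (d+1) → Pt (d+1)} {γ : Pt d → Pt d}

/-- decomposition of a tangent vector field in the frame `e_a`. -/
lemma tangent_decomp (hrel : ∀ q, fderiv ℝ Φ q (γ q) = ξ (Φ q)) (q : Pt d) :
    ξ (Φ q) = fun α => ∑ b, γ q b * eF Φ b q α := by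
  funext α
  rw [← hrel q, clm_eval (fderiv ℝ Φ q) (γ q)]
  simp [eF, Finset.sum_apply]

lemma pull2_eq_ip (q : Pt d) (a b : Fin d) :
    pull2 Φ g q a b = ip (fun β => ∑ α, g (Φ q) α β * eF Φ a q α) (eF Φ b q) := by
  simp only [pull2, ip]
  rw [Finset.sum_comm]
  apply Finset.sum_congr rfl; intro β _
  rw [Finset.sum_mul]
  apply Finset.sum_congr rfl; intro α _
  show g (Φ q) α β * eF Φ a q α * eF Φ b q β = _
  ring

/-- `⟨ξ_♭, e_a⟩` in terms of the first fundamental form. -/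
lemma ipflat_e (hrel : ∀ q, fderiv ℝ Φ q (γ q) = ξ (Φ q)) (q : Pt d) (a : Fin d) :
    ip (flat g ξ (Φ q)) (eF Φ a q) = ∑ b, γ q b * pull2 Φ g q a b := by
  rw [ip_flat, gdot_eq_ip, tangent_decomp hrel q, ip_lin]
  apply Finset.sum_congr rfl; intro b _
  rw [pull2_eq_ip]

/-- `⟨ξ_♭, ℓ⟩` in terms of `g(ℓ, e_b)`. -/
lemma ipflat_l (hrel : ∀ q, fderiv ℝ Φ q (γ q) = ξ (Φ q)) (q : Pt d) :
    ip (flat g ξ (Φ q)) (ℓ q) = ∑ b, γ q b * gdot g (Φ q) (ℓ q) (eF Φ b q) := by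
  rw [ip_flat, gdot_eq_ip, tangent_decomp hrel q, ip_lin]
  apply Finset.sum_congr rfl; intro b _
  rw [gdot_eq_ip]

end Infra5
section Infra6
variable {d : ℕ} {g ginv : Pt (d+1) → Fin (d+1) → Fin (d+1) → ℝ}
  {Φ : Pt d → Pt (d+1)} {ℓ : Pt d → Pt (d+1)} {ξ : Pt (d+1) → Pt (d+1)} {γ : Pt d → Pt d}

lemma contDiff_flat (hg : ∀ a b, ContDiff ℝ (⊤:ℕ∞) fun x => g x a b)
    (hξ : ContDiff ℝ (⊤:ℕ∞) ξ) (α : Fin (d+1)) :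
    ContDiff ℝ (⊤:ℕ∞) (fun x => flat g ξ x α) := by
  unfold flat
  exact ContDiff.sum fun c _ => (hg α c).mul ((contDiff_pi.1 hξ) c)

lemma diffAt_comp_Φ {f : Pt (d+1) → ℝ} (hf : ContDiff ℝ (⊤:ℕ∞) f)
    (hΦ : ContDiff ℝ (⊤:ℕ∞) Φ) (p : Pt d) : DifferentiableAt ℝ (fun q => f (Φ q)) p :=
  cd_diffAt (hf.comp hΦ) p

/-- chain rule for `pd` along `Φ`, in terms of `eF`. -/
lemma pd_chain {f : Pt (d+1) → ℝ} (hf : ContDiff ℝ (⊤:ℕ∞) f)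
    (hΦ : ContDiff ℝ (⊤:ℕ∞) Φ) (a : Fin d) (p : Pt d) :
    pd (fun q => f (Φ q)) a p = ∑ α, eF Φ a p α * pd f α (Φ p) := by
  exact pd_comp (cd_diffAt hf (Φ p)) (hΦ.differentiable (by simp) p) a

/-- tangential components of `dω` are derivatives of the pulled-back components. -/
lemma dext_tangent (hΦ : ContDiff ℝ (⊤:ℕ∞) Φ) {ω : Pt (d+1) → Fin (d+1) → ℝ}
    (hω : ∀ β, ContDiff ℝ (⊤:ℕ∞) fun x => ω x β) (p : Pt d) (a b : Fin d) :
    dext ω (Φ p) (eF Φ a p) (eF Φ b p)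
      = pd (fun q => ip (ω (Φ q)) (eF Φ b q)) a p
        - pd (fun q => ip (ω (Φ q)) (eF Φ a q)) b p := by
  have hpd : ∀ (a b : Fin d), pd (fun q => ip (ω (Φ q)) (eF Φ b q)) a p
      = ∑ β, (pd (fun q => ω (Φ q) β) a p * eF Φ b p β
          + ω (Φ p) β * pd (fun q => eF Φ b q β) a p) := by
    intro a b
    unfold ip
    rw [pd_sum _ (fun β _ => ((diffAt_comp_Φ (hω β) hΦ p).fun_mul
      (cd_diffAt (contDiff_eF hΦ b β) p)))]
    exact Finset.sum_congr rfl fun β _ =>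
      pd_mul (diffAt_comp_Φ (hω β) hΦ p) (cd_diffAt (contDiff_eF hΦ b β) p) a
  have expand : ∀ (a b : Fin d),
      (∑ β, (∑ α, eF Φ a p α * pd (fun y => ω y β) α (Φ p)) * eF Φ b p β)
        = ∑ α, ∑ β, eF Φ a p α * eF Φ b p β * pd (fun y => ω y β) α (Φ p) := by
    intro a b
    simp only [Finset.sum_mul]
    rw [Finset.sum_comm]
    apply Finset.sum_congr rfl; intro α _
    apply Finset.sum_congr rfl; intro β _
    ring
  have swap : (∑ α, ∑ β, eF Φ b p α * eF Φ a p β * pd (fun y => ω y β) α (Φ p))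
      = ∑ α, ∑ β, eF Φ a p α * eF Φ b p β * pd (fun y => ω y α) β (Φ p) := by
    rw [Finset.sum_comm]
    apply Finset.sum_congr rfl; intro α _
    apply Finset.sum_congr rfl; intro β _
    ring
  have hchain : ∀ (c : Fin d) (β : Fin (d+1)), pd (fun q => ω (Φ q) β) c p
      = ∑ α, eF Φ c p α * pd (fun y => ω y β) α (Φ p) :=
    fun c β => pd_chain (hω β) hΦ c p
  have hcancel : (∑ β, ω (Φ p) β * pd (fun q => eF Φ b q β) a p)
      = ∑ β, ω (Φ p) β * pd (fun q => eF Φ a q β) b p :=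
    Finset.sum_congr rfl fun β _ => by rw [pd_eF_symm hΦ a b β p]
  rw [hpd a b, hpd b a, Finset.sum_add_distrib, Finset.sum_add_distrib, hcancel,
    add_sub_add_right_eq_sub]
  simp only [hchain]
  rw [expand a b, expand b a, swap]
  unfold dext
  rw [← Finset.sum_sub_distrib]
  apply Finset.sum_congr rfl; intro α _
  rw [← Finset.sum_sub_distrib]
  apply Finset.sum_congr rfl; intro β _
  ring

/-- for a Killing 1-form, `dω(u,v) = -2 u^α v^β ∇_β ω_α`. -/
lemma dext_killing (hg : ∀ a b, ContDiff ℝ (⊤:ℕ∞) fun x => g x a b)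
    (hsymm : ∀ x a b, g x a b = g x b a)
    (hinv : ∀ x a b, (∑ c, ginv x a c * g x c b) = if a = b then (1:ℝ) else 0)
    (hξ : ContDiff ℝ (⊤:ℕ∞) ξ) (hK : ∀ x a b, lieD g ξ x a b = 0)
    (x : Pt (d+1)) (u v : Pt (d+1)) :
    dext (flat g ξ) x u v
      = -2 * ∑ α, ∑ β, u α * v β * covD g ginv (flat g ξ) x β α := by
  have key : ∀ α β, pd (fun y => flat g ξ y β) α x - pd (fun y => flat g ξ y α) β x
      = -2 * covD g ginv (flat g ξ) x β α := by
    intro α β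
    have h1 := killing_covD hg hsymm hinv hξ x α β
    rw [hK x α β] at h1
    have h2 : covD g ginv (flat g ξ) x α β - covD g ginv (flat g ξ) x β α
        = pd (fun y => flat g ξ y β) α x - pd (fun y => flat g ξ y α) β x := by
      unfold covD
      have : ∀ c, Chr g ginv c α β x = Chr g ginv c β α x := fun c => chr_symm hsymm x c α β
      simp only [this]
      ring
    have h3 : covD g ginv (flat g ξ) x α β = -covD g ginv (flat g ξ) x β α := by linarith
    rw [← h2, h3]; ring
  unfold dext
  simp only [key]
  rw [Finset.mul_sum]
  apply Finset.sum_congr rfl; intro α _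
  rw [Finset.mul_sum]
  apply Finset.sum_congr rfl; intro β _
  ring

end Infra6
section Infra7
variable {d : ℕ} {g ginv : Pt (d+1) → Fin (d+1) → Fin (d+1) → ℝ}
  {Φ : Pt d → Pt (d+1)} {ℓ : Pt d → Pt (d+1)} {ξ : Pt (d+1) → Pt (d+1)} {γ : Pt d → Pt d}

/-- `H_{ab} = g(e_b, ∇_{e_a} ℓ)` (metricity). -/
lemma Hgen_eq (hg : ∀ a b, ContDiff ℝ (⊤:ℕ∞) fun x => g x a b)
    (hsymm : ∀ x a b, g x a b = g x b a)
    (hinv : ∀ x a b, (∑ c, ginv x a c * g x c b) = if a = b then (1:ℝ) else 0)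
    (hΦ : ContDiff ℝ (⊤:ℕ∞) Φ) (hℓ : ContDiff ℝ (⊤:ℕ∞) ℓ) (p : Pt d) (a b : Fin d) :
    Hgen g ginv Φ ℓ a b p
      = ∑ ν, eF Φ b p ν * ∑ ρ, g (Φ p) ν ρ * covVecS g ginv Φ ℓ a p ρ := by
  unfold Hgen
  apply Finset.sum_congr rfl; intro ν _
  congr 1
  -- per ν : pd (flatS · ν) a p - ∑ c (∑ μ e_a^μ Γ^c_{μν}) flatS_c = ∑ ρ g_{νρ} covVecS^ρ
  have hpdflatS : pd (fun q => flatS g Φ ℓ q ν) a p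
      = ∑ ρ, ((∑ μ, eF Φ a p μ * pd (fun y => g y ν ρ) μ (Φ p)) * ℓ p ρ
          + g (Φ p) ν ρ * pd (fun q => ℓ q ρ) a p) := by
    unfold flatS
    rw [pd_sum _ (fun ρ _ => (diffAt_comp_Φ (hg ν ρ) hΦ p).fun_mul (comp_diffAt hℓ ρ p))]
    apply Finset.sum_congr rfl; intro ρ _
    rw [pd_mul (diffAt_comp_Φ (hg ν ρ) hΦ p) (comp_diffAt hℓ ρ p) a,
      pd_chain (hg ν ρ) hΦ a p]
  rw [hpdflatS]
  simp only [metricity hsymm hinv (Φ p)]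
  unfold covVecS flatS
  -- now pure finite-sum algebra
  rw [Finset.sum_add_distrib]
  have split : ∀ ρ : Fin (d+1),
      (∑ μ, eF Φ a p μ * ((∑ c, Chr g ginv c μ ν (Φ p) * g (Φ p) c ρ)
        + ∑ c, g (Φ p) ν c * Chr g ginv c μ ρ (Φ p))) * ℓ p ρ
      = (∑ μ, ∑ c, eF Φ a p μ * Chr g ginv c μ ν (Φ p) * g (Φ p) c ρ * ℓ p ρ)
        + ∑ μ, ∑ c, eF Φ a p μ * g (Φ p) ν c * Chr g ginv c μ ρ (Φ p) * ℓ p ρ := by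
    intro ρ
    rw [Finset.sum_mul, ← Finset.sum_add_distrib]
    apply Finset.sum_congr rfl; intro μ _
    rw [mul_add, add_mul, Finset.mul_sum, Finset.sum_mul, Finset.mul_sum, Finset.sum_mul]
    congr 1
    · apply Finset.sum_congr rfl; intro c _; ring
    · apply Finset.sum_congr rfl; intro c _; ring
  rw [Finset.sum_congr rfl (fun ρ _ => split ρ), Finset.sum_add_distrib]
  -- T1 cancels the second-fundamental-form subtraction term
  have hT1 : (∑ ρ, ∑ μ, ∑ c, eF Φ a p μ * Chr g ginv c μ ν (Φ p) * g (Φ p) c ρ * ℓ p ρ)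
      = ∑ c, (∑ μ, eF Φ a p μ * Chr g ginv c μ ν (Φ p)) * ∑ ρ, g (Φ p) c ρ * ℓ p ρ := by
    rw [sum_rot3 (fun ρ μ c => eF Φ a p μ * Chr g ginv c μ ν (Φ p) * g (Φ p) c ρ * ℓ p ρ)]
    apply Finset.sum_congr rfl; intro c _
    rw [Finset.sum_mul]
    apply Finset.sum_congr rfl; intro μ _
    rw [Finset.mul_sum]
    apply Finset.sum_congr rfl; intro ρ _
    ring
  have hT2 : (∑ ρ, ∑ μ, ∑ c, eF Φ a p μ * g (Φ p) ν c * Chr g ginv c μ ρ (Φ p) * ℓ p ρ)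
      = ∑ ρ, g (Φ p) ν ρ * ∑ μ, ∑ σ, Chr g ginv ρ μ σ (Φ p) * eF Φ a p μ * ℓ p σ := by
    rw [sum_rot3 (fun ρ μ c => eF Φ a p μ * g (Φ p) ν c * Chr g ginv c μ ρ (Φ p) * ℓ p ρ)]
    apply Finset.sum_congr rfl; intro ρ _
    rw [Finset.mul_sum]
    apply Finset.sum_congr rfl; intro μ _
    rw [Finset.mul_sum]
    apply Finset.sum_congr rfl; intro σ _
    ring
  rw [hT1, hT2]
  have hRHS : (∑ ρ, g (Φ p) ν ρ *
      (pd (fun q => ℓ q ρ) a p + ∑ μ, ∑ σ, Chr g ginv ρ μ σ (Φ p) * eF Φ a p μ * ℓ p σ))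
      = (∑ ρ, g (Φ p) ν ρ * pd (fun q => ℓ q ρ) a p)
        + ∑ ρ, g (Φ p) ν ρ * ∑ μ, ∑ σ, Chr g ginv ρ μ σ (Φ p) * eF Φ a p μ * ℓ p σ := by
    rw [← Finset.sum_add_distrib]
    apply Finset.sum_congr rfl; intro ρ _
    ring
  rw [hRHS]
  ring

end Infra7
section Infra8
variable {d : ℕ} {g ginv : Pt (d+1) → Fin (d+1) → Fin (d+1) → ℝ}
  {Φ : Pt d → Pt (d+1)} {ℓ : Pt d → Pt (d+1)} {ξ : Pt (d+1) → Pt (d+1)} {γ : Pt d → Pt d}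

lemma flat_covVecS (hg : ∀ a b, ContDiff ℝ (⊤:ℕ∞) fun x => g x a b)
    (hsymm : ∀ x a b, g x a b = g x b a)
    (hinv : ∀ x a b, (∑ c, ginv x a c * g x c b) = if a = b then (1:ℝ) else 0)
    (hΦ : ContDiff ℝ (⊤:ℕ∞) Φ) (hℓ : ContDiff ℝ (⊤:ℕ∞) ℓ)
    (hrel : ∀ q, fderiv ℝ Φ q (γ q) = ξ (Φ q)) (p : Pt d) (a : Fin d) :
    (∑ α, flat g ξ (Φ p) α * covVecS g ginv Φ ℓ a p α)
      = ∑ b, γ p b * Hgen g ginv Φ ℓ a b p := by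
  have hflat : ∀ α, flat g ξ (Φ p) α = ∑ c, ∑ b, g (Φ p) α c * (γ p b * eF Φ b p c) := by
    intro α
    unfold flat
    apply Finset.sum_congr rfl; intro c _
    rw [tangent_decomp hrel p, Finset.mul_sum]
  simp only [hflat, Finset.sum_mul]
  rw [sum_rot3 (fun α c b => g (Φ p) α c * (γ p b * eF Φ b p c) * covVecS g ginv Φ ℓ a p α)]
  apply Finset.sum_congr rfl; intro b _
  rw [Hgen_eq hg hsymm hinv hΦ hℓ p a b, Finset.mul_sum]
  apply Finset.sum_congr rfl; intro c _
  rw [Finset.mul_sum, Finset.mul_sum]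
  apply Finset.sum_congr rfl; intro α _
  rw [hsymm (Φ p) α c]
  ring

lemma dext_l_e (hg : ∀ a b, ContDiff ℝ (⊤:ℕ∞) fun x => g x a b)
    (hsymm : ∀ x a b, g x a b = g x b a)
    (hinv : ∀ x a b, (∑ c, ginv x a c * g x c b) = if a = b then (1:ℝ) else 0)
    (hΦ : ContDiff ℝ (⊤:ℕ∞) Φ) (hℓ : ContDiff ℝ (⊤:ℕ∞) ℓ) (hξ : ContDiff ℝ (⊤:ℕ∞) ξ)
    (hK : ∀ x a b, lieD g ξ x a b = 0)
    (hrel : ∀ q, fderiv ℝ Φ q (γ q) = ξ (Φ q)) (p : Pt d) (a : Fin d) :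
    dext (flat g ξ) (Φ p) (ℓ p) (eF Φ a p)
      = -2 * pd (fun q => ∑ b, γ q b * gdot g (Φ q) (ℓ q) (eF Φ b q)) a p
        + 2 * ∑ b, γ p b * Hgen g ginv Φ ℓ a b p := by
  rw [dext_killing hg hsymm hinv hξ hK (Φ p) (ℓ p) (eF Φ a p)]
  have e1 : ∀ α, (∑ β, ℓ p α * eF Φ a p β * covD g ginv (flat g ξ) (Φ p) β α)
      = ℓ p α * pd (fun q => flat g ξ (Φ q) α) a p
        - ∑ β, ∑ c, Chr g ginv c β α (Φ p) * flat g ξ (Φ p) c * (eF Φ a p β * ℓ p α) := by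
    intro α
    unfold covD
    rw [pd_chain (contDiff_flat hg hξ α) hΦ a p, Finset.mul_sum, ← Finset.sum_sub_distrib]
    apply Finset.sum_congr rfl; intro β _
    rw [mul_sub]
    congr 1
    · ring
    · rw [Finset.mul_sum]
      apply Finset.sum_congr rfl; intro c _
      ring
  have split : (∑ α, ∑ β, ℓ p α * eF Φ a p β * covD g ginv (flat g ξ) (Φ p) β α)
      = (∑ α, ℓ p α * pd (fun q => flat g ξ (Φ q) α) a p)
        - ∑ c, flat g ξ (Φ p) c * (∑ β, ∑ α, Chr g ginv c β α (Φ p) * eF Φ a p β * ℓ p α) := by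
    rw [Finset.sum_congr rfl (fun α _ => e1 α), Finset.sum_sub_distrib]
    congr 1
    rw [sum_rot3 (fun α β c =>
      Chr g ginv c β α (Φ p) * flat g ξ (Φ p) c * (eF Φ a p β * ℓ p α))]
    apply Finset.sum_congr rfl; intro c _
    rw [Finset.mul_sum]
    apply Finset.sum_congr rfl; intro β _
    rw [Finset.mul_sum]
    apply Finset.sum_congr rfl; intro α _
    ring
  have hprod : pd (fun q => ip (flat g ξ (Φ q)) (ℓ q)) a p
      = ∑ α, (pd (fun q => flat g ξ (Φ q) α) a p * ℓ p α
          + flat g ξ (Φ p) α * pd (fun q => ℓ q α) a p) := by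
    unfold ip
    rw [pd_sum _ (fun α _ => (diffAt_comp_Φ (contDiff_flat hg hξ α) hΦ p).fun_mul
      (comp_diffAt hℓ α p))]
    exact Finset.sum_congr rfl fun α _ =>
      pd_mul (diffAt_comp_Φ (contDiff_flat hg hξ α) hΦ p) (comp_diffAt hℓ α p) a
  have hcov : ∀ c : Fin (d+1), covVecS g ginv Φ ℓ a p c
      = pd (fun q => ℓ q c) a p + ∑ β, ∑ α, Chr g ginv c β α (Φ p) * eF Φ a p β * ℓ p α := by
    intro c; rfl
  have hA : (∑ α, ℓ p α * pd (fun q => flat g ξ (Φ q) α) a p)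
      = pd (fun q => ip (flat g ξ (Φ q)) (ℓ q)) a p
        - ∑ α, flat g ξ (Φ p) α * pd (fun q => ℓ q α) a p := by
    rw [hprod, Finset.sum_add_distrib]
    have : (∑ α, ℓ p α * pd (fun q => flat g ξ (Φ q) α) a p)
        = ∑ α, pd (fun q => flat g ξ (Φ q) α) a p * ℓ p α :=
      Finset.sum_congr rfl fun α _ => by ring
    rw [this]; ring
  have hB : (∑ c, flat g ξ (Φ p) c * (∑ β, ∑ α, Chr g ginv c β α (Φ p) * eF Φ a p β * ℓ p α))
      = (∑ c, flat g ξ (Φ p) c * covVecS g ginv Φ ℓ a p c)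
        - ∑ c, flat g ξ (Φ p) c * pd (fun q => ℓ q c) a p := by
    rw [← Finset.sum_sub_distrib]
    apply Finset.sum_congr rfl; intro c _
    rw [hcov c]
    ring
  have hstep : (∑ α, ∑ β, ℓ p α * eF Φ a p β * covD g ginv (flat g ξ) (Φ p) β α)
      = pd (fun q => ip (flat g ξ (Φ q)) (ℓ q)) a p
        - ∑ c, flat g ξ (Φ p) c * covVecS g ginv Φ ℓ a p c := by
    rw [split, hA, hB]; ring
  rw [hstep, flat_covVecS hg hsymm hinv hΦ hℓ hrel p a,
    pd_congr (fun q => ipflat_l (g := g) hrel q) a p]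
  ring

end Infra8
section Infra9
variable {n : ℕ}

lemma dext_add_antisym (ω : Pt n → Fin n → ℝ) (x u v : Pt n) :
    dext ω x u v + dext ω x v u = 0 := by
  unfold dext
  have h2 : (∑ α, ∑ β, v α * u β * (pd (fun y => ω y β) α x - pd (fun y => ω y α) β x))
      = ∑ α, ∑ β, v β * u α * (pd (fun y => ω y α) β x - pd (fun y => ω y β) α x) :=
    Finset.sum_comm
  rw [h2, ← Finset.sum_add_distrib]
  rw [Finset.sum_eq_zero]
  intro α _
  rw [← Finset.sum_add_distrib]
  rw [Finset.sum_eq_zero]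
  intro β _
  ring

lemma dext_antisym (ω : Pt n → Fin n → ℝ) (x u v : Pt n) :
    dext ω x u v = -dext ω x v u := by
  have := dext_add_antisym ω x u v; linarith

lemma dext_self (ω : Pt n → Fin n → ℝ) (x u : Pt n) : dext ω x u u = 0 := by
  have := dext_add_antisym ω x u u; linarith

lemma dext_eq_ip (ω : Pt n → Fin n → ℝ) (x u v : Pt n) :
    dext ω x u v
      = ip (fun β => ∑ α, u α * (pd (fun y => ω y β) α x - pd (fun y => ω y α) β x)) v := by
  unfold dext ip
  rw [Finset.sum_comm]
  apply Finset.sum_congr rfl; intro β _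
  rw [Finset.sum_mul]
  apply Finset.sum_congr rfl; intro α _
  ring

lemma dext_lin {ι : Type*} [Fintype ι] (ω : Pt n → Fin n → ℝ) (x : Pt n)
    (c c' : ι → ℝ) (vv ww : ι → Pt n) :
    dext ω x (fun α => ∑ j, c j * vv j α) (fun α => ∑ k, c' k * ww k α)
      = ∑ k, c' k * ∑ j, c j * dext ω x (vv j) (ww k) := by
  rw [dext_eq_ip, ip_lin]
  apply Finset.sum_congr rfl; intro k _
  congr 1
  have hFu : ∀ β, (∑ α, (∑ j, c j * vv j α)
        * (pd (fun y => ω y β) α x - pd (fun y => ω y α) β x))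
      = ∑ j, c j * ∑ α, vv j α * (pd (fun y => ω y β) α x - pd (fun y => ω y α) β x) := by
    intro β
    simp only [Finset.sum_mul]
    rw [Finset.sum_comm]
    apply Finset.sum_congr rfl; intro j _
    rw [Finset.mul_sum]
    apply Finset.sum_congr rfl; intro α _
    ring
  show ip _ (ww k) = _
  unfold ip
  simp only [hFu]
  simp only [Finset.sum_mul]
  rw [Finset.sum_comm]
  apply Finset.sum_congr rfl; intro j _
  rw [dext_eq_ip]
  unfold ip
  rw [Finset.mul_sum]
  apply Finset.sum_congr rfl; intro β _
  simp only []
  ring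

lemma form4_congr (g g' : Pt n → Fin n → Fin n → ℝ) (A B A' B' : Pt n → Pt n)
    (x x' : Pt n) (u u' : Fin 4 → Pt n)
    (hP : ∀ i, ip (flat g A x) (u i) = ip (flat g' A' x') (u' i))
    (hQ : ∀ i, ip (flat g B x) (u i) = ip (flat g' B' x') (u' i))
    (hR : ∀ i k, dext (flat g B) x (u i) (u k) = dext (flat g' B') x' (u' i) (u' k)) :
    form4 g A B x u = form4 g' A' B' x' u' := by
  unfold form4
  congr 1
  apply Finset.sum_congr rfl; intro σ _
  rw [hP, hQ, hR]

end Infra9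
/-- The identified dual coframe `{n, w^a}` along `Σ`. -/
def coF {d : ℕ} (nn : Pt d → Fin (d+1) → ℝ) (ww : Fin d → Pt d → Fin (d+1) → ℝ) (p : Pt d) :
    Option (Fin d) → Pt (d+1)
  | none => nn p
  | some a => ww a p
/-- non-matchability criterion: if `(V⁻, g⁻)` admits a two-dimensional
Abelian group generated by Killing fields `ξ⁻, η⁻` whose 4-forms `ξ⁻∧η⁻∧dξ⁻` and
`ξ⁻∧η⁻∧dη⁻` are nowhere simultaneously zero, then there is no symmetry-preserving
matching of `(V⁻, g⁻)` to any spacetime admitting an orthogonally transitive `G₂`. -/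
theorem no_matching_to_orthogonally_transitive {d : ℕ}
    (gm ginvm : Pt (d+1) → Fin (d+1) → Fin (d+1) → ℝ)
    (ξm ηm : Pt (d+1) → Pt (d+1))
    (hgm : ∀ a b, ContDiff ℝ (⊤ : ℕ∞) fun x => gm x a b)
    (hginvm : ∀ a b, ContDiff ℝ (⊤ : ℕ∞) fun x => ginvm x a b)
    (hgmsymm : ∀ x a b, gm x a b = gm x b a)
    (hinvm : ∀ x a b, (∑ c, ginvm x a c * gm x c b) = if a = b then (1:ℝ) else 0)
    (hξm : ContDiff ℝ (⊤ : ℕ∞) ξm) (hηm : ContDiff ℝ (⊤ : ℕ∞) ηm)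
    (hKξm : ∀ x a b, lieD gm ξm x a b = 0)   -- ξ⁻ is Killing
    (hKηm : ∀ x a b, lieD gm ηm x a b = 0)   -- η⁻ is Killing
    (hcommm : ∀ x, lieBr ξm ηm x = 0)        -- the G₂ is Abelian
    -- the two 4-forms of the (−) side are nowhere simultaneously zero:
    (hnz : ∀ x : Pt (d+1),
      (∃ u : Fin 4 → Pt (d+1), form4 gm ξm ηm x u ≠ 0) ∨
      (∃ u : Fin 4 → Pt (d+1), form4 gm ηm ξm x u ≠ 0)) :
    ¬ ∃ (gp ginvp : Pt (d+1) → Fin (d+1) → Fin (d+1) → ℝ)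
        (ξp ηp : Pt (d+1) → Pt (d+1))
        (Φp Φm : Pt d → Pt (d+1)) (ℓp ℓm : Pt d → Pt (d+1))
        (np nm : Pt d → Fin (d+1) → ℝ) (wp wm : Fin d → Pt d → Fin (d+1) → ℝ)
        (γ₁ γ₂ : Pt d → Pt d) (W : Set (Pt (d+1))),
      -- (V⁺, g⁺) is a pseudo-Riemannian manifold
      (∀ a b, ContDiff ℝ (⊤ : ℕ∞) fun x => gp x a b) ∧
      (∀ a b, ContDiff ℝ (⊤ : ℕ∞) fun x => ginvp x a b) ∧
      (∀ x a b, gp x a b = gp x b a) ∧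
      (∀ x a b, (∑ c, ginvp x a c * gp x c b) = if a = b then (1:ℝ) else 0) ∧
      -- ξ⁺, η⁺ generate an Abelian G₂ of isometries of (V⁺, g⁺)
      ContDiff ℝ (⊤ : ℕ∞) ξp ∧ ContDiff ℝ (⊤ : ℕ∞) ηp ∧
      (∀ x a b, lieD gp ξp x a b = 0) ∧ (∀ x a b, lieD gp ηp x a b = 0) ∧
      (∀ x, lieBr ξp ηp x = 0) ∧
      -- Φ^± are embeddings of the common matching manifold σ
      ContDiff ℝ (⊤ : ℕ∞) Φp ∧ Function.Injective Φp ∧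
      (∀ p, Function.Injective (fderiv ℝ Φp p)) ∧
      ContDiff ℝ (⊤ : ℕ∞) Φm ∧ Function.Injective Φm ∧
      (∀ p, Function.Injective (fderiv ℝ Φm p)) ∧
      ContDiff ℝ (⊤ : ℕ∞) ℓp ∧ ContDiff ℝ (⊤ : ℕ∞) ℓm ∧
      ContDiff ℝ (⊤ : ℕ∞) γ₁ ∧ ContDiff ℝ (⊤ : ℕ∞) γ₂ ∧
      -- preliminary junction conditions
      (∀ p a b, pull2 Φp gp p a b = pull2 Φm gm p a b) ∧
      -- dual coframes of the rigged frames on both sides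
      (∀ p, ip (np p) (ℓp p) = 1) ∧ (∀ p a, ip (np p) (eF Φp a p) = 0) ∧
      (∀ p a, ip (wp a p) (ℓp p) = 0) ∧
      (∀ p a b, ip (wp a p) (eF Φp b p) = if a = b then (1:ℝ) else 0) ∧
      (∀ p, ip (nm p) (ℓm p) = 1) ∧ (∀ p a, ip (nm p) (eF Φm a p) = 0) ∧
      (∀ p a, ip (wm a p) (ℓm p) = 0) ∧
      (∀ p a b, ip (wm a p) (eF Φm b p) = if a = b then (1:ℝ) else 0) ∧
      -- identification of the riggings
      (∀ p, gdot gp (Φp p) (ℓp p) (ℓp p) = gdot gm (Φm p) (ℓm p) (ℓm p)) ∧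
      (∀ p a, gdot gp (Φp p) (ℓp p) (eF Φp a p) = gdot gm (Φm p) (ℓm p) (eF Φm a p)) ∧
      -- equal generalized second fundamental forms
      (∀ p a b, Hgen gp ginvp Φp ℓp a b p = Hgen gm ginvm Φm ℓm a b p) ∧
      -- the matching preserves the G₂: generators related to common γ₁, γ₂ on σ
      (∀ p, fderiv ℝ Φp p (γ₁ p) = ξp (Φp p)) ∧
      (∀ p, fderiv ℝ Φm p (γ₁ p) = ξm (Φm p)) ∧
      (∀ p, fderiv ℝ Φp p (γ₂ p) = ηp (Φp p)) ∧
      (∀ p, fderiv ℝ Φm p (γ₂ p) = ηm (Φm p)) ∧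
      -- the G₂ acts orthogonally transitively on the (+) side
      Set.range Φp ⊆ W ∧
      (∀ x ∈ W, ∀ u : Fin 4 → Pt (d+1), form4 gp ξp ηp x u = 0) ∧
      (∀ x ∈ W, ∀ u : Fin 4 → Pt (d+1), form4 gp ηp ξp x u = 0) := by
  rintro ⟨gp, ginvp, ξp, ηp, Φp, Φm, ℓp, ℓm, np, nm, wp, wm, γ₁, γ₂, W,
    hgp, hginvp, hgpsymm, hinvp, hξp, hηp, hKξp, hKηp, hcommp,
    hΦpC, hΦpInj, hΦpdInj, hΦmC, hΦmInj, hΦmdInj, hℓpC, hℓmC, hγ₁C, hγ₂C,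
    hpull, hnpℓ, hnpe, hwpℓ, hwpe, hnmℓ, hnme, hwmℓ, hwme,
    hrig1, hrig2, hHmatch, hξpΦ, hξmΦ, hηpΦ, hηmΦ, hrange, hOT1, hOT2⟩
  classical
  set p0 : Pt d := fun _ => 0 with hp0def
  have hdualm : ∀ j k, ip (coF nm wm p0 j) (frameV Φm ℓm p0 k)
      = if j = k then (1:ℝ) else 0 := by
    intro j k
    match j, k with
    | none, none => simpa [coF, frameV] using hnmℓ p0
    | none, some b => simpa [coF, frameV] using hnme p0 b
    | some a, none => simpa [coF, frameV] using hwmℓ p0 a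
    | some a, some b => simpa [coF, frameV] using hwme p0 a b
  -- matched values of `⟨A_♭, frame⟩` for a pair of related generators
  have key : ∀ (Am Ap : Pt (d+1) → Pt (d+1)) (γ : Pt d → Pt d),
      (∀ q, fderiv ℝ Φm q (γ q) = Am (Φm q)) →
      (∀ q, fderiv ℝ Φp q (γ q) = Ap (Φp q)) →
      ∀ j, ip (flat gm Am (Φm p0)) (frameV Φm ℓm p0 j)
        = ip (flat gp Ap (Φp p0)) (frameV Φp ℓp p0 j) := by
    intro Am Ap γ hrm hrp j
    match j with
    | none =>
      show ip (flat gm Am (Φm p0)) (ℓm p0) = ip (flat gp Ap (Φp p0)) (ℓp p0)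
      rw [ipflat_l hrm p0, ipflat_l hrp p0]
      exact Finset.sum_congr rfl fun b _ => by rw [hrig2 p0 b]
    | some a =>
      show ip (flat gm Am (Φm p0)) (eF Φm a p0) = ip (flat gp Ap (Φp p0)) (eF Φp a p0)
      rw [ipflat_e hrm p0 a, ipflat_e hrp p0 a]
      exact Finset.sum_congr rfl fun b _ => by rw [hpull p0 a b]
  -- matched values of `dω` on frame pairs for a pair of related Killing generators
  have keyR : ∀ (Am Ap : Pt (d+1) → Pt (d+1)) (γ : Pt d → Pt d),
      ContDiff ℝ (⊤:ℕ∞) Am → ContDiff ℝ (⊤:ℕ∞) Ap →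
      (∀ x a b, lieD gm Am x a b = 0) → (∀ x a b, lieD gp Ap x a b = 0) →
      (∀ q, fderiv ℝ Φm q (γ q) = Am (Φm q)) →
      (∀ q, fderiv ℝ Φp q (γ q) = Ap (Φp q)) →
      ∀ j k, dext (flat gm Am) (Φm p0) (frameV Φm ℓm p0 j) (frameV Φm ℓm p0 k)
        = dext (flat gp Ap) (Φp p0) (frameV Φp ℓp p0 j) (frameV Φp ℓp p0 k) := by
    intro Am Ap γ hAmC hApC hKm hKp hrm hrp
    have hee : ∀ a b : Fin d, dext (flat gm Am) (Φm p0) (eF Φm a p0) (eF Φm b p0)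
        = dext (flat gp Ap) (Φp p0) (eF Φp a p0) (eF Φp b p0) := by
      intro a b
      rw [dext_tangent hΦmC (fun β => contDiff_flat hgm hAmC β) p0 a b,
        dext_tangent hΦpC (fun β => contDiff_flat hgp hApC β) p0 a b]
      have comp : ∀ (a b : Fin d), pd (fun q => ip (flat gm Am (Φm q)) (eF Φm b q)) a p0
          = pd (fun q => ip (flat gp Ap (Φp q)) (eF Φp b q)) a p0 := by
        intro a b
        apply pd_congr
        intro q
        rw [ipflat_e hrm q b, ipflat_e hrp q b]
        exact Finset.sum_congr rfl fun c _ => by rw [hpull q b c]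
      rw [comp a b, comp b a]
    have hle : ∀ a : Fin d, dext (flat gm Am) (Φm p0) (ℓm p0) (eF Φm a p0)
        = dext (flat gp Ap) (Φp p0) (ℓp p0) (eF Φp a p0) := by
      intro a
      rw [dext_l_e hgm hgmsymm hinvm hΦmC hℓmC hAmC hKm hrm p0 a,
        dext_l_e hgp hgpsymm hinvp hΦpC hℓpC hApC hKp hrp p0 a]
      congr 1
      · congr 1
        apply pd_congr
        intro q
        exact Finset.sum_congr rfl fun b _ => by rw [hrig2 q b]
      · congr 1
        exact Finset.sum_congr rfl fun b _ => by rw [hHmatch p0 a b]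
    intro j k
    match j, k with
    | none, none =>
      show dext _ _ (ℓm p0) (ℓm p0) = dext _ _ (ℓp p0) (ℓp p0)
      rw [dext_self, dext_self]
    | none, some b => exact hle b
    | some a, none =>
      show dext _ _ (eF Φm a p0) (ℓm p0) = dext _ _ (eF Φp a p0) (ℓp p0)
      rw [dext_antisym (flat gm Am), dext_antisym (flat gp Ap), hle a]
    | some a, some b => exact hee a b
  -- both 4-forms of the (−) side vanish at Φm p0, contradicting hnz
  have main : ∀ (Am Ap Bm Bp : Pt (d+1) → Pt (d+1)) (γA γB : Pt d → Pt d),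
      ContDiff ℝ (⊤:ℕ∞) Bm → ContDiff ℝ (⊤:ℕ∞) Bp →
      (∀ x a b, lieD gm Bm x a b = 0) → (∀ x a b, lieD gp Bp x a b = 0) →
      (∀ q, fderiv ℝ Φm q (γA q) = Am (Φm q)) →
      (∀ q, fderiv ℝ Φp q (γA q) = Ap (Φp q)) →
      (∀ q, fderiv ℝ Φm q (γB q) = Bm (Φm q)) →
      (∀ q, fderiv ℝ Φp q (γB q) = Bp (Φp q)) →
      (∀ x ∈ W, ∀ u : Fin 4 → Pt (d+1), form4 gp Ap Bp x u = 0) →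
      ∀ u : Fin 4 → Pt (d+1), form4 gm Am Bm (Φm p0) u = 0 := by
    intro Am Ap Bm Bp γA γB hBmC hBpC hKBm hKBp hrAm hrAp hrBm hrBp hOT u
    have hdec : ∀ i, u i
        = fun α => ∑ j, ip (coF nm wm p0 j) (u i) * frameV Φm ℓm p0 j α :=
      fun i => frame_reconstruct hdualm (u i)
    have heq : form4 gm Am Bm (Φm p0) u = form4 gp Ap Bp (Φp p0)
        (fun i => fun α => ∑ j, ip (coF nm wm p0 j) (u i) * frameV Φp ℓp p0 j α) := by
      apply form4_congr
      · intro i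
        conv_lhs => rw [hdec i]
        rw [ip_lin, ip_lin]
        exact Finset.sum_congr rfl fun j _ => by rw [key Am Ap γA hrAm hrAp j]
      · intro i
        conv_lhs => rw [hdec i]
        rw [ip_lin, ip_lin]
        exact Finset.sum_congr rfl fun j _ => by rw [key Bm Bp γB hrBm hrBp j]
      · intro i k
        conv_lhs => rw [hdec i, hdec k]
        rw [dext_lin, dext_lin]
        apply Finset.sum_congr rfl; intro k' _
        congr 1
        apply Finset.sum_congr rfl; intro j _
        congr 1
        exact keyR Bm Bp γB hBmC hBpC hKBm hKBp hrBm hrBp j k'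
    rw [heq]
    exact hOT (Φp p0) (hrange ⟨p0, rfl⟩) _
  rcases hnz (Φm p0) with ⟨u, hu⟩ | ⟨u, hu⟩
  · exact hu (main ξm ξp ηm ηp γ₁ γ₂ hηm hηp hKηm hKηp hξmΦ hξpΦ hηmΦ hηpΦ hOT1 u)
  · exact hu (main ηm ηp ξm ξp γ₂ γ₁ hξm hξp hKξm hKξp hηmΦ hηpΦ hξmΦ hξpΦ hOT2 u)
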